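/- arXiv:2605.08358 — 2 statements merged into one kernel-verified Lean document; each statement's English description precedes it below -/
import Mathlib

section
/- There is a universal constant K > 0 with the following property. Let γ > 0 and let Q be an m×N real matrix. Suppose that for every nonempty subset J ⊆ {1,…,N} there exist k ∈ ℕ and matrices L ∈ ℝ^{m×k}, R ∈ ℝ^{k×|J|} with L·R = Q_J, ‖L‖_{2→∞} ≤ γ, and ‖R‖_F ≤ √|J|, where Q_J is the submatrix of Q consisting of the columns indexed by J. Then γ2(Q) ≤ K·γ·√(1 + log₂(N)). -/
open Matrix

/-- `‖M‖_{2→∞}`: the maximum ℓ2 norm of a row of `M`. -/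
noncomputable def rowNorm2inf {α β : Type*} [Fintype α] [Fintype β] (M : Matrix α β ℝ) : ℝ :=
  ⨆ i, Real.sqrt (∑ j, (M i j) ^ 2)

/-- `‖M‖_{1→2}`: the maximum ℓ2 norm of a column of `M`. -/
noncomputable def colNorm12 {α β : Type*} [Fintype α] [Fintype β] (M : Matrix α β ℝ) : ℝ :=
  ⨆ j, Real.sqrt (∑ i, (M i j) ^ 2)

/-- `‖M‖_F`: the Frobenius norm of `M`. -/
noncomputable def frobNorm {α β : Type*} [Fintype α] [Fintype β] (M : Matrix α β ℝ) : ℝ :=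
  Real.sqrt (∑ i, ∑ j, (M i j) ^ 2)

/-- The γ₂ factorization norm. -/
noncomputable def gamma2 {α β : Type*} [Fintype α] [Fintype β] (A : Matrix α β ℝ) : ℝ :=
  sInf { c : ℝ | ∃ (k : ℕ) (L : Matrix α (Fin k) ℝ) (R : Matrix (Fin k) β ℝ),
    L * R = A ∧ c = rowNorm2inf L * colNorm12 R }

/-!
Split the columns greedily. For a set `S` of columns, the local factorization of `Q_S` has
`‖R‖_F² ≤ |S|`, so by Markov's inequality at most half of its columns have squared norm
above `2`. Keep the factorization on the remaining columns and recurse on the bad ones: after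
`⌊log₂ N⌋ + 1` rounds no column is left. Stacking the left factors side by side adds their
squared row norms, giving `‖L‖²_{2→∞} ≤ γ² (⌊log₂ N⌋ + 1)`, while each column of the right
factor is taken from a single round, so `‖R‖²_{1→2} ≤ 2`.
-/

open Finset

section NormBounds

variable {α β : Type*} [Fintype α] [Fintype β]

lemma rowNorm2inf_nonneg (M : Matrix α β ℝ) : 0 ≤ rowNorm2inf M :=
  Real.iSup_nonneg fun _ => Real.sqrt_nonneg _

lemma colNorm12_nonneg (M : Matrix α β ℝ) : 0 ≤ colNorm12 M :=
  Real.iSup_nonneg fun _ => Real.sqrt_nonneg _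

lemma rowNorm2inf_le_sqrt {M : Matrix α β ℝ} {a : ℝ} (h : ∀ i, ∑ j, M i j ^ 2 ≤ a) :
    rowNorm2inf M ≤ √a :=
  Real.iSup_le (fun i => Real.sqrt_le_sqrt (h i)) (Real.sqrt_nonneg a)

lemma colNorm12_le_sqrt {M : Matrix α β ℝ} {b : ℝ} (h : ∀ j, ∑ i, M i j ^ 2 ≤ b) :
    colNorm12 M ≤ √b :=
  Real.iSup_le (fun j => Real.sqrt_le_sqrt (h j)) (Real.sqrt_nonneg b)

lemma sum_sq_le_sq_of_rowNorm2inf_le {M : Matrix α β ℝ} {c : ℝ} (h : rowNorm2inf M ≤ c)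
    (i : α) : ∑ j, M i j ^ 2 ≤ c ^ 2 :=
  (Real.sqrt_le_iff.1 ((le_ciSup (Set.finite_range _).bddAbove i).trans h)).2

lemma sum_sum_sq_le_of_frobNorm_le_sqrt {M : Matrix α β ℝ} {c : ℝ} (hc : 0 ≤ c)
    (h : frobNorm M ≤ √c) : ∑ i, ∑ j, M i j ^ 2 ≤ c :=
  (Real.sqrt_le_sqrt_iff hc).1 h

lemma gamma2_le_sqrt_mul_sqrt {κ : Type*} [Fintype κ] {A : Matrix α β ℝ} {L : Matrix α κ ℝ}
    {R : Matrix κ β ℝ} {a b : ℝ} (hLR : L * R = A) (hL : ∀ i, ∑ k, L i k ^ 2 ≤ a)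
    (hR : ∀ j, ∑ k, R k j ^ 2 ≤ b) : gamma2 A ≤ √a * √b := by
  set e := (Fintype.equivFin κ).symm
  have hfac : L.submatrix id e * R.submatrix e id = A := by
    rw [submatrix_mul_equiv, hLR, submatrix_id_id]
  calc gamma2 A ≤ rowNorm2inf (L.submatrix id e) * colNorm12 (R.submatrix e id) :=
        csInf_le ⟨0, ?_⟩ ⟨_, _, _, hfac, rfl⟩
    _ ≤ √a * √b := mul_le_mul ?_ ?_ (colNorm12_nonneg _) (Real.sqrt_nonneg a)
  · rintro c ⟨k, L', R', -, rfl⟩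
    exact mul_nonneg (rowNorm2inf_nonneg L') (colNorm12_nonneg R')
  · exact rowNorm2inf_le_sqrt fun i => (e.sum_comp fun k => L i k ^ 2).trans_le (hL i)
  · exact colNorm12_le_sqrt fun j => (e.sum_comp fun k => R k j ^ 2).trans_le (hR j)

end NormBounds

section FactorsOn

variable {α β : Type*} (Q : Matrix α β ℝ)

/-- `a` and `b` bound *squared* norms, so that the row bounds of glued factorizations add up. -/
def FactorsOn (S : Finset β) (a b : ℝ) : Prop :=
  ∃ (κ : Type) (_ : Fintype κ) (L : Matrix α κ ℝ) (R : Matrix κ β ℝ),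
    (∀ i, ∀ j ∈ S, (L * R) i j = Q i j) ∧ (∀ i, ∑ k, L i k ^ 2 ≤ a) ∧
      ∀ j ∈ S, ∑ k, R k j ^ 2 ≤ b

variable {Q}

lemma factorsOn_empty {a : ℝ} (b : ℝ) (ha : 0 ≤ a) : FactorsOn Q ∅ a b :=
  ⟨Empty, inferInstance, 0, 0, by simp, fun _ => by simpa using ha, by simp⟩

lemma FactorsOn.gamma2_le [Fintype α] [Fintype β] {a b : ℝ} (h : FactorsOn Q univ a b) :
    gamma2 Q ≤ √a * √b := by
  obtain ⟨κ, _, L, R, hLR, hL, hR⟩ := h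
  exact gamma2_le_sqrt_mul_sqrt (ext fun i j => hLR i j (mem_univ j)) hL
    fun j => hR j (mem_univ j)

lemma FactorsOn.union [DecidableEq β] {S T : Finset β} {a a' b : ℝ} (hS : FactorsOn Q S a b)
    (hT : FactorsOn Q T a' b) : FactorsOn Q (S ∪ T) (a + a') b := by
  obtain ⟨κ, _, L, R, hLR, hL, hR⟩ := hS
  obtain ⟨κ', _, L', R', hLR', hL', hR'⟩ := hT
  refine ⟨κ ⊕ κ', inferInstance, fromCols L L',
    fromRows (of fun k j => if j ∈ S then R k j else 0) (of fun k j => if j ∈ S then 0 else R' k j),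
    fun i j hj => ?_, fun i => ?_, fun j hj => ?_⟩
  · rw [fromCols_mul_fromRows, Matrix.add_apply]
    by_cases hjS : j ∈ S
    · simpa [mul_apply, hjS] using hLR i j hjS
    · simpa [mul_apply, hjS] using hLR' i j ((mem_union.1 hj).resolve_left hjS)
  · simp only [Fintype.sum_sum_type, fromCols_apply_inl, fromCols_apply_inr]
    exact add_le_add (hL i) (hL' i)
  · simp only [Fintype.sum_sum_type, fromRows_apply_inl, fromRows_apply_inr, of_apply]
    by_cases hjS : j ∈ S
    · simpa [hjS] using hR j hjS
    · simpa [hjS] using hR' j ((mem_union.1 hj).resolve_left hjS)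

lemma exists_factorsOn_sdiff [DecidableEq β] {κ : Type} [Fintype κ] {S : Finset β}
    {L : Matrix α κ ℝ} {R : Matrix κ β ℝ} {a c : ℝ} (t : ℝ)
    (hLR : ∀ i, ∀ j ∈ S, (L * R) i j = Q i j) (hL : ∀ i, ∑ k, L i k ^ 2 ≤ a)
    (hR : ∑ j ∈ S, ∑ k, R k j ^ 2 ≤ c) :
    ∃ B ⊆ S, t * #B ≤ c ∧ FactorsOn Q (S \ B) a t := by
  classical
  set B := S.filter fun j => t < ∑ k, R k j ^ 2
  refine ⟨B, filter_subset _ _, ?_, κ, ‹_›, L, R, fun i j hj => hLR i j (sdiff_subset hj), hL,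
    fun j hj => ?_⟩
  · calc t * #B = ∑ _j ∈ B, t := by rw [sum_const, nsmul_eq_mul, mul_comm]
      _ ≤ ∑ j ∈ B, ∑ k, R k j ^ 2 := sum_le_sum fun j hj => (mem_filter.1 hj).2.le
      _ ≤ ∑ j ∈ S, ∑ k, R k j ^ 2 :=
        sum_le_sum_of_subset_of_nonneg (filter_subset _ _) fun _ _ _ => by positivity
      _ ≤ c := hR
  · simp only [B, mem_sdiff, mem_filter, not_and, not_lt] at hj
    exact hj.2 hj.1

lemma exists_mul_eq_on_of_frobNorm_le {κ : Type} [Fintype κ] {S : Finset β}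
    {L : Matrix α κ ℝ} {R : Matrix κ {j // j ∈ S} ℝ}
    (hLR : L * R = of fun i (j : {j // j ∈ S}) => Q i j) (hR : frobNorm R ≤ √(#S : ℝ)) :
    ∃ R' : Matrix κ β ℝ, (∀ i, ∀ j ∈ S, (L * R') i j = Q i j) ∧
      ∑ j ∈ S, ∑ k, R' k j ^ 2 ≤ #S := by
  classical
  refine ⟨of fun k j => if h : j ∈ S then R k ⟨j, h⟩ else 0, fun i j hj => ?_, ?_⟩
  · simpa [mul_apply, hj] using congr_fun (congr_fun hLR i) ⟨j, hj⟩
  · rw [← sum_coe_sort S, sum_comm]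
    simpa using sum_sum_sq_le_of_frobNorm_le_sqrt (Nat.cast_nonneg _) hR

lemma factorsOn_of_card_lt_two_pow [Fintype α] [DecidableEq β] {γ : ℝ}
    (hQ : ∀ J : Finset β, J.Nonempty →
      ∃ (k : ℕ) (L : Matrix α (Fin k) ℝ) (R : Matrix (Fin k) {j // j ∈ J} ℝ),
        L * R = of (fun i (j : {j // j ∈ J}) => Q i j) ∧
        rowNorm2inf L ≤ γ ∧ frobNorm R ≤ √(#J : ℝ))
    (r : ℕ) (S : Finset β) (hS : #S < 2 ^ r) : FactorsOn Q S (γ ^ 2 * r) 2 := by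
  induction r generalizing S with
  | zero =>
    obtain rfl : S = ∅ := card_eq_zero.1 (by simpa using hS)
    exact factorsOn_empty 2 (by simp)
  | succ r ih =>
    obtain rfl | hne := S.eq_empty_or_nonempty
    · exact factorsOn_empty 2 (by positivity)
    obtain ⟨k, L, R, hLR, hL, hR⟩ := hQ S hne
    obtain ⟨R', hLR', hR'⟩ := exists_mul_eq_on_of_frobNorm_le hLR hR
    obtain ⟨B, hBS, hB, hgood⟩ :=
      exists_factorsOn_sdiff 2 hLR' (sum_sq_le_sq_of_rowNorm2inf_le hL) hR'
    have hBr : #B < 2 ^ r := by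
      have : 2 * #B ≤ #S := by exact_mod_cast hB
      rw [pow_succ] at hS
      omega
    have := hgood.union (ih B hBr)
    rwa [sdiff_union_of_subset hBS, show γ ^ 2 + γ ^ 2 * r = γ ^ 2 * ↑(r + 1) by push_cast; ring]
      at this

end FactorsOn

theorem stmt12 :
    ∃ K : ℝ, 0 < K ∧
    ∀ (m N : ℕ) (γ : ℝ), 0 < γ →
    ∀ Q : Matrix (Fin m) (Fin N) ℝ,
      (∀ J : Finset (Fin N), J.Nonempty →
        ∃ (k : ℕ) (L : Matrix (Fin m) (Fin k) ℝ) (R : Matrix (Fin k) {j // j ∈ J} ℝ),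
          L * R = Matrix.of (fun i (j : {j // j ∈ J}) => Q i j) ∧
          rowNorm2inf L ≤ γ ∧ frobNorm R ≤ Real.sqrt (J.card : ℝ)) →
      gamma2 Q ≤ K * γ * Real.sqrt (1 + Real.logb 2 N) := by
  refine ⟨√2, by positivity, fun m N γ hγ Q hQ => ?_⟩
  set r := Nat.log 2 N + 1
  have hr : (r : ℝ) ≤ 1 + Real.logb 2 N := by
    have := Real.natLog_le_logb N 2
    push_cast [r] at this ⊢
    linarith
  have hN : #(univ : Finset (Fin N)) < 2 ^ r := by
    simpa using Nat.lt_pow_succ_log_self one_lt_two N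
  calc gamma2 Q ≤ √(γ ^ 2 * r) * √2 := (factorsOn_of_card_lt_two_pow hQ r univ hN).gamma2_le
    _ = √2 * γ * √r := by rw [Real.sqrt_mul (sq_nonneg γ), Real.sqrt_sq hγ.le]; ring
    _ ≤ √2 * γ * √(1 + Real.logb 2 N) := by gcongr
end

section
/- Let α ∈ (0,1), let m ≥ 2, let U be a finite universe of size N, and let Q = (q_1,…,q_m) be a tuple of statistical queries on U with query matrix Q ∈ [0,1]^{m×N}. Let w := ⌈32·ln(m)/α²⌉ and assume w ≤ N and hdisc*(Q, w) ≤ αw/4. Then for every n and every dataset x ∈ U^n whose elements are pairwise distinct, there exist a positive integer s ≤ (5/α)·hdisc*(Q, w) and a dataset y ∈ U^s such that ‖Q(x) − Q(y)‖_∞ ≤ (9/8)·α. -/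
open Matrix

/-- The discrepancy of the columns of `Q` indexed by `S`: the minimum over ±1 colorings
of `S` of `‖Q_S x‖_∞`. -/
noncomputable def colDisc {m : ℕ} {β : Type*} [Fintype β] (Q : Matrix (Fin m) β ℝ)
    (S : Finset β) : ℝ :=
  sInf { v : ℝ | ∃ x : β → ℝ, (∀ j ∈ S, x j = 1 ∨ x j = -1) ∧
    v = ⨆ i, |∑ j ∈ S, Q i j * x j| }

/-- The restricted hereditary discrepancy `hdisc(Q, w)`. -/
noncomputable def hdisc {m : ℕ} {β : Type*} [Fintype β] (Q : Matrix (Fin m) β ℝ)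
    (w : ℕ) : ℝ :=
  sSup { v : ℝ | ∃ S : Finset β, S.card ≤ w ∧ v = colDisc Q S }

/-- `Q*`: the matrix `Q` with an all-ones row appended. -/
noncomputable def starMatrix {m : ℕ} {β : Type*} [Fintype β] (Q : Matrix (Fin m) β ℝ) :
    Matrix (Fin (m + 1)) β ℝ :=
  Matrix.of fun i j => if h : (i : ℕ) < m then Q ⟨i, h⟩ j else 1

/-- The modified restricted hereditary discrepancy `hdisc*(Q, w)`. -/
noncomputable def hdiscStar {m : ℕ} {β : Type*} [Fintype β] (Q : Matrix (Fin m) β ℝ)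
    (w : ℕ) : ℝ :=
  hdisc (starMatrix Q) w

/-!
A uniformly random sample of `w` points of the dataset has, with positive probability, all query
means within `3α/16` of those of the dataset (Hoeffding's inequality and a union bound over the
`2m` tails). The sample is then repeatedly halved: color the points of odd multiplicity with a
coloring of discrepancy at most `D = hdisc*(Q, w)` with respect to `Q*` (the all-ones row keeps
the size close to half), and keep `(c + ε) / 2` copies of each point. A halving of a multiset of
size `k` moves every mean by at most `D / k'`, where `k'` is the new size; as the sizes roughly
halve, these errors form a geometric series which, stopped at the first size below `5D/α`, sums
to at most `15α/16`.
-/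

open Real Finset MeasureTheory ProbabilityTheory
open scoped NNReal

section Sampling

variable {V : Type*} [Fintype V] [Nonempty V] [MeasurableSpace V] [DiscreteMeasurableSpace V]

lemma integral_uniformOfFintype (f : V → ℝ) :
    ∫ a, f a ∂(PMF.uniformOfFintype V).toMeasure = (∑ a, f a) / Fintype.card V := by
  simp [PMF.integral_eq_sum, PMF.uniformOfFintype_apply, Finset.mul_sum, div_eq_inv_mul]

lemma hasSubgaussianMGF_sum_sample (f : V → ℝ) (hf : ∀ a, f a ∈ Set.Icc (0 : ℝ) 1) (w : ℕ) :
    HasSubgaussianMGF (fun ω : Fin w → V ↦ ∑ j, (f (ω j) - (∑ a, f a) / Fintype.card V))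
      (w / 4) (Measure.pi fun _ ↦ (PMF.uniformOfFintype V).toMeasure) := by
  set μ := Measure.pi fun _ : Fin w ↦ (PMF.uniformOfFintype V).toMeasure
  have hf_meas : ∀ j : Fin w, AEMeasurable (fun ω : Fin w → V ↦ f (ω j)) μ := fun j ↦
    ((Measurable.of_discrete (f := f)).comp (measurable_pi_apply j)).aemeasurable
  have hmean : ∀ j : Fin w, ∫ ω, f (ω j) ∂μ = (∑ a, f a) / Fintype.card V := fun j ↦ by
    rw [integral_comp_eval (Measurable.of_discrete.aestronglyMeasurable), integral_uniformOfFintype]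
  have hindep : iIndepFun (fun j ω ↦ f (ω j) - (∑ a, f a) / Fintype.card V) μ :=
    iIndepFun_pi (X := fun _ a ↦ f a - (∑ a, f a) / Fintype.card V)
      fun _ ↦ Measurable.of_discrete.aemeasurable
  have hsum := HasSubgaussianMGF.sum_of_iIndepFun hindep (s := univ) (c := fun _ ↦ 1 / 4)
    fun j _ ↦ by
      rw [← hmean j]
      convert hasSubgaussianMGF_of_mem_Icc (a := 0) (b := 1) (hf_meas j)
        (ae_of_all _ fun ω ↦ hf _) using 1
      norm_num
  convert hsum using 1
  simp [div_eq_mul_inv]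

lemma measureReal_lt_abs_sum_sample_le (f : V → ℝ) (hf : ∀ a, f a ∈ Set.Icc (0 : ℝ) 1)
    {w : ℕ} (hw : 0 < w) {τ : ℝ} (hτ : 0 ≤ τ) :
    (Measure.pi fun _ : Fin w ↦ (PMF.uniformOfFintype V).toMeasure).real
        {ω | w * τ < |∑ j, (f (ω j) - (∑ a, f a) / Fintype.card V)|}
      ≤ 2 * exp (-(2 * w * τ ^ 2)) := by
  have h := hasSubgaussianMGF_sum_sample f hf w
  have hexp : -(w * τ) ^ 2 / (2 * ((w / 4 : ℝ≥0) : ℝ)) = -(2 * w * τ ^ 2) := by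
    have : (w : ℝ) ≠ 0 := by positivity
    push_cast
    field_simp
    ring
  refine (measureReal_mono fun ω (hω : (w : ℝ) * τ < |_|) ↦ ?_).trans <|
    (measureReal_union_le _ _).trans <| (add_le_add (h.measure_ge_le (ε := w * τ) (by positivity))
      (h.neg.measure_ge_le (ε := w * τ) (by positivity))).trans (by rw [hexp]; linarith)
  rcases lt_abs.1 hω with hlt | hlt
  exacts [Or.inl hlt.le, Or.inr hlt.le]

end Sampling

theorem exists_sample_mean_close {ι V : Type*} [Fintype ι] [Fintype V] [Nonempty V] (r : ι → V → ℝ)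
    (hr : ∀ i a, r i a ∈ Set.Icc (0 : ℝ) 1) {w : ℕ} (hw : 0 < w) {τ : ℝ} (hτ : 0 ≤ τ)
    (hsmall : 2 * Fintype.card ι * exp (-(2 * w * τ ^ 2)) < 1) :
    ∃ g : Fin w → V, ∀ i, |(∑ j, r i (g j)) / w - (∑ a, r i a) / Fintype.card V| ≤ τ := by
  let _ : MeasurableSpace V := ⊤
  have : DiscreteMeasurableSpace V := ⟨fun _ ↦ trivial⟩
  set μ := Measure.pi fun _ : Fin w ↦ (PMF.uniformOfFintype V).toMeasure
  set S : ι → (Fin w → V) → ℝ := fun i ω ↦ ∑ j, (r i (ω j) - (∑ a, r i a) / Fintype.card V)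
  by_contra! hbad
  have hcover : Set.univ ⊆ ⋃ i, {ω | w * τ < |S i ω|} := fun ω _ ↦ by
    obtain ⟨i, hi⟩ := hbad ω
    have hS : (∑ j, r i (ω j)) / w - (∑ a, r i a) / Fintype.card V = S i ω / w := by
      simp only [S, sum_sub_distrib, sum_const, card_univ, Fintype.card_fin, nsmul_eq_mul]
      field_simp
    rw [hS, abs_div, Nat.abs_cast, lt_div_iff₀ (by positivity)] at hi
    exact Set.mem_iUnion.2 ⟨i, show w * τ < |S i ω| by linarith⟩
  have : (1 : ℝ) ≤ 2 * Fintype.card ι * exp (-(2 * w * τ ^ 2)) := calc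
    (1 : ℝ) = μ.real Set.univ := by simp
    _ ≤ ∑ i, μ.real {ω | w * τ < |S i ω|} :=
      (measureReal_mono hcover).trans (measureReal_iUnion_fintype_le _)
    _ ≤ ∑ _i : ι, 2 * exp (-(2 * w * τ ^ 2)) :=
      sum_le_sum fun i _ ↦ measureReal_lt_abs_sum_sample_le (r i) (hr i) hw hτ
    _ = 2 * Fintype.card ι * exp (-(2 * w * τ ^ 2)) := by
      rw [sum_const, card_univ, nsmul_eq_mul]
      ring
  linarith

section Counting

variable {U : Type*} [Fintype U]

lemma sum_card_fiber_mul [DecidableEq U] {w : ℕ} (z : Fin w → U) (f : U → ℝ) :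
    ∑ u, (#{j | z j = u} : ℝ) * f u = ∑ j, f (z j) := by
  rw [← sum_fiberwise univ z fun j ↦ f (z j)]
  refine sum_congr rfl fun u _ ↦ ?_
  rw [sum_congr rfl fun j hj ↦ by rw [(mem_filter.1 hj).2], sum_const, nsmul_eq_mul]

lemma exists_seq_sum_eq (c : U → ℕ) :
    ∃ y : Fin (∑ u, c u) → U, ∀ f : U → ℝ, ∑ b, f (y b) = ∑ u, c u * f u := by
  let e : Fin (∑ u, c u) ≃ Σ u, Fin (c u) := (Fintype.equivFinOfCardEq (by simp)).symm
  refine ⟨fun b ↦ (e b).1, fun f ↦ ?_⟩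
  rw [e.sum_comp fun σ ↦ f σ.1, ← univ_sigma_univ, sum_sigma]
  simp

end Counting

section Halving

lemma exists_two_mul_eq_add (n : ℕ) {s : ℝ} (hodd : Odd n → s = 1 ∨ s = -1)
    (heven : Even n → s = 0) : ∃ k : ℕ, 2 * (k : ℝ) = n + s := by
  rcases Nat.even_or_odd n with ⟨t, rfl⟩ | ⟨t, rfl⟩
  · exact ⟨t, by rw [heven ⟨t, rfl⟩]; push_cast; ring⟩
  · rcases hodd ⟨t, rfl⟩ with rfl | rfl
    · exact ⟨t + 1, by push_cast; ring⟩
    · exact ⟨t, by push_cast; ring⟩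

lemma abs_add_div_add_sub_div_le {v d k e D : ℝ} (hv0 : 0 ≤ v) (hvk : v ≤ k) (hd : |d| ≤ D)
    (he0 : 0 ≤ e) (heD : e ≤ D) (hk : 0 < k) :
    |(v + d) / (k + e) - v / k| ≤ 2 * D / (k + e) := by
  have hke : 0 < k + e := by linarith
  rw [div_sub_div _ _ hke.ne' hk.ne', abs_div, abs_of_pos (mul_pos hke hk),
    div_le_div_iff₀ (mul_pos hke hk) hke]
  have hnum : |(v + d) * k - (k + e) * v| ≤ 2 * D * k := by
    rw [show (v + d) * k - (k + e) * v = d * k - v * e by ring]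
    calc |d * k - v * e| ≤ |d| * k + v * e := by
          refine (abs_sub _ _).trans ?_
          rw [abs_mul, abs_of_pos hk, abs_of_nonneg (mul_nonneg hv0 he0)]
      _ ≤ D * k + k * D := by gcongr
      _ = 2 * D * k := by ring
  calc |(v + d) * k - (k + e) * v| * (k + e) ≤ 2 * D * k * (k + e) := by gcongr
    _ = 2 * D * ((k + e) * k) := by ring

/-- The error still allowed when halving down from a multiset of size `k`: a halving step to
size `k'` costs `D / k'`, which the drop from `halvingBudget α D k` to `halvingBudget α D k'`
pays for. -/
noncomputable def halvingBudget (α D k : ℝ) : ℝ :=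
  max 0 (15 * α / 16 - 5 * D / (2 * k))

lemma halvingBudget_le {α D k : ℝ} (hα : 0 ≤ α) (hD : 0 ≤ D) (hk : 0 ≤ k) :
    halvingBudget α D k ≤ 15 * α / 16 :=
  max_le (by positivity) (by linarith [show 0 ≤ 5 * D / (2 * k) by positivity])

lemma halvingBudget_add_div_le {α D k k' : ℝ} (hα : α ∈ Set.Ioo (0 : ℝ) 1) (hD : 0 ≤ D)
    (hk : 5 * D / α < k) (hk'lo : k / 2 ≤ k') (hk'hi : k' ≤ (k + D) / 2) :
    halvingBudget α D k' + D / k' ≤ halvingBudget α D k := by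
  unfold halvingBudget
  obtain ⟨hα0, hα1⟩ := hα
  have h5D : 5 * D ≤ α * k := by rw [div_lt_iff₀ hα0] at hk; linarith
  have hk0 : 0 < k := lt_of_le_of_lt (by positivity) hk
  have hk'0 : 0 < k' := by linarith
  refine le_trans ?_ (le_max_right _ _)
  rcases le_total (15 * α / 16 - 5 * D / (2 * k')) 0 with h | h
  · rw [max_eq_left h, zero_add]
    have : D / k' ≤ 2 * D / k := by
      rw [div_le_div_iff₀ hk'0 hk0]; nlinarith
    have : 2 * D / k + 5 * D / (2 * k) ≤ 15 * α / 16 := by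
      rw [div_add_div _ _ hk0.ne' (by positivity), div_le_iff₀ (by positivity)]; nlinarith
    linarith
  · rw [max_eq_right h]
    have : 5 * D / (2 * k) ≤ 3 * D / (2 * k') := by
      have : 5 * k' ≤ 3 * k := by nlinarith
      rw [div_le_div_iff₀ (by positivity) (by positivity)]
      nlinarith [mul_le_mul_of_nonneg_left this hD]
    have : 3 * D / (2 * k') = 5 * D / (2 * k') - D / k' := by field_simp; ring
    linarith

variable {ι U : Type*}

def HasBalancedColorings (q : ι → U → ℝ) (w : ℕ) (D : ℝ) : Prop :=
  ∀ S : Finset U, S.card ≤ w → ∃ ε : U → ℝ, (∀ u ∈ S, ε u = 1 ∨ ε u = -1) ∧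
    (∀ i, |∑ u ∈ S, q i u * ε u| ≤ D) ∧ |∑ u ∈ S, ε u| ≤ D

namespace HasBalancedColorings

variable {q : ι → U → ℝ} {w : ℕ} {D : ℝ}

lemma nonneg (hcol : HasBalancedColorings q w D) : 0 ≤ D := by
  obtain ⟨_, _, _, h⟩ := hcol ∅ (by simp)
  simpa using h

lemma exists_sum_nonneg (hcol : HasBalancedColorings q w D) {S : Finset U} (hS : S.card ≤ w) :
    ∃ ε : U → ℝ, (∀ u ∈ S, ε u = 1 ∨ ε u = -1) ∧ (∀ i, |∑ u ∈ S, q i u * ε u| ≤ D) ∧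
      0 ≤ ∑ u ∈ S, ε u ∧ ∑ u ∈ S, ε u ≤ D := by
  obtain ⟨ε, hε, hrow, hsum⟩ := hcol S hS
  rcases le_total 0 (∑ u ∈ S, ε u) with hpos | hneg
  · exact ⟨ε, hε, hrow, hpos, (abs_le.1 hsum).2⟩
  · refine ⟨-ε, fun u hu ↦ ?_, fun i ↦ ?_, ?_, ?_⟩
    · rcases hε u hu with h | h <;> simp [h]
    · simpa [sum_neg_distrib] using hrow i
    · simpa [sum_neg_distrib] using hneg
    · simp only [Pi.neg_apply, sum_neg_distrib]
      linarith [(abs_le.1 hsum).1]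

variable [Fintype U]

/-- `δ` colors the points of odd multiplicity of `c`. -/
lemma exists_halving (hcol : HasBalancedColorings q w D) {T : Finset U} (hT : T.card ≤ w)
    (c : U → ℕ) (hc : ∀ u ∉ T, c u = 0) :
    ∃ c' : U → ℕ, ∃ δ : U → ℝ, (∀ u, 2 * (c' u : ℝ) = c u + δ u) ∧ (∀ u ∉ T, c' u = 0) ∧
      (∀ i, |∑ u, q i u * δ u| ≤ D) ∧ 0 ≤ ∑ u, δ u ∧ ∑ u, δ u ≤ D := by
  classical
  set S := T.filter fun u ↦ Odd (c u)
  obtain ⟨ε, hε, hrow, he0, heD⟩ := hcol.exists_sum_nonneg (S := S) ((card_filter_le _ _).trans hT)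
  set δ : U → ℝ := fun u ↦ if u ∈ S then ε u else 0
  have hS : ∀ u, u ∈ S ↔ Odd (c u) := fun u ↦ by
    by_cases hu : u ∈ T <;> simp [S, hu, hc]
  have hδ : ∀ u, ∃ k : ℕ, 2 * (k : ℝ) = c u + δ u := fun u ↦
    exists_two_mul_eq_add (c u) (fun h ↦ by simpa [δ, (hS u).2 h] using hε u ((hS u).2 h))
      (fun h ↦ by simp [δ, hS, Nat.not_odd_iff_even.2 h])
  choose c' hc' using hδ
  refine ⟨c', δ, hc', fun u hu ↦ ?_, fun i ↦ ?_, ?_, ?_⟩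
  · have hδu : δ u = 0 := if_neg fun h ↦ hu (mem_filter.1 h).1
    have h := hc' u
    rw [hc u hu, hδu] at h
    exact_mod_cast (by push_cast at h; linarith : (c' u : ℝ) = 0)
  · simpa [δ, mul_ite, sum_ite_mem] using hrow i
  · simpa [δ, sum_ite_mem] using he0
  · simpa [δ, sum_ite_mem] using heD

noncomputable def weightedMean (c : U → ℕ) (f : U → ℝ) : ℝ :=
  (∑ u, c u * f u) / ∑ u, (c u : ℝ)

lemma exists_halving_step (hq : ∀ i u, q i u ∈ Set.Icc (0 : ℝ) 1)
    (hcol : HasBalancedColorings q w D) {T : Finset U} (hT : T.card ≤ w)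
    (c : U → ℕ) (hc : ∀ u ∉ T, c u = 0) (hk : 0 < ∑ u, (c u : ℝ)) :
    ∃ c' : U → ℕ, (∀ u ∉ T, c' u = 0) ∧ (∑ u, (c u : ℝ)) / 2 ≤ ∑ u, (c' u : ℝ) ∧
      ∑ u, (c' u : ℝ) ≤ (∑ u, (c u : ℝ) + D) / 2 ∧
      ∀ i, |weightedMean c' (q i) - weightedMean c (q i)| ≤ D / ∑ u, (c' u : ℝ) := by
  obtain ⟨c', δ, hc', hT', hrow, he0, heD⟩ := hcol.exists_halving hT c hc
  have hweighted : ∀ f : U → ℝ, ∑ u, c' u * f u = (∑ u, c u * f u + ∑ u, f u * δ u) / 2 :=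
    fun f ↦ by
      rw [← sum_add_distrib, sum_div]
      exact sum_congr rfl fun u _ ↦ by linear_combination f u / 2 * hc' u
  have hsize : ∑ u, (c' u : ℝ) = (∑ u, (c u : ℝ) + ∑ u, δ u) / 2 := by
    simpa using hweighted 1
  refine ⟨c', hT', by rw [hsize]; linarith, by rw [hsize]; linarith, fun i ↦ ?_⟩
  have hv0 : 0 ≤ ∑ u, c u * q i u :=
    sum_nonneg fun u _ ↦ mul_nonneg (Nat.cast_nonneg _) (hq i u).1
  have hvk : ∑ u, c u * q i u ≤ ∑ u, (c u : ℝ) :=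
    sum_le_sum fun u _ ↦ mul_le_of_le_one_right (Nat.cast_nonneg _) (hq i u).2
  rw [weightedMean, weightedMean, hweighted, hsize, div_div_div_cancel_right₀ two_ne_zero]
  convert abs_add_div_add_sub_div_le hv0 hvk (hrow i) he0 heD hk using 1
  field_simp

theorem exists_small_multiset (hq : ∀ i u, q i u ∈ Set.Icc (0 : ℝ) 1)
    (hcol : HasBalancedColorings q w D) {α : ℝ} (hα : α ∈ Set.Ioo (0 : ℝ) 1)
    {T : Finset U} (hT : T.card ≤ w) (c : U → ℕ) (hc : ∀ u ∉ T, c u = 0) (hk : 0 < ∑ u, c u) :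
    ∃ c' : U → ℕ, 0 < ∑ u, c' u ∧ ∑ u, (c' u : ℝ) ≤ 5 * D / α ∧
      ∀ i, |weightedMean c' (q i) - weightedMean c (q i)|
        ≤ halvingBudget α D (∑ u, (c u : ℝ)) := by
  induction hkdef : ∑ u, c u using Nat.strong_induction_on generalizing c with
  | _ k ih =>
  have hkR : ∑ u, (c u : ℝ) = k := by rw [← hkdef]; push_cast; rfl
  by_cases hstop : (k : ℝ) ≤ 5 * D / α
  · exact ⟨c, hkdef ▸ hk, hkR ▸ hstop, fun i ↦ by simp [halvingBudget]⟩
  rw [not_le] at hstop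
  have hk0 : (0 : ℝ) < k := by exact_mod_cast hkdef ▸ hk
  have hDk : D < k := lt_of_le_of_lt (by
    rw [le_div_iff₀ hα.1]; nlinarith [hcol.nonneg, hα.2]) hstop
  obtain ⟨c', hT', hlo, hhi, herr⟩ := hcol.exists_halving_step hq hT c hc (hkR ▸ hk0)
  rw [hkR] at hlo hhi
  have hk' : ∑ u, c' u < k := by exact_mod_cast (show ∑ u, (c' u : ℝ) < k by linarith)
  have hk'0 : 0 < ∑ u, c' u := by exact_mod_cast (show 0 < ∑ u, (c' u : ℝ) by linarith)
  obtain ⟨c'', hpos, hsize, herr'⟩ := ih _ hk' c' hT' hk'0 rfl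
  refine ⟨c'', hpos, hsize, fun i ↦ ?_⟩
  calc |weightedMean c'' (q i) - weightedMean c (q i)|
      ≤ |weightedMean c'' (q i) - weightedMean c' (q i)|
        + |weightedMean c' (q i) - weightedMean c (q i)| := abs_sub_le _ _ _
    _ ≤ halvingBudget α D (∑ u, (c' u : ℝ)) + D / ∑ u, (c' u : ℝ) :=
      add_le_add (herr' i) (herr i)
    _ ≤ halvingBudget α D (∑ u, (c u : ℝ)) :=
      hkR ▸ halvingBudget_add_div_le hα hcol.nonneg hstop hlo hhi

theorem exists_short_seq_mean_close (hq : ∀ i u, q i u ∈ Set.Icc (0 : ℝ) 1)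
    (hcol : HasBalancedColorings q w D) {α : ℝ} (hα : α ∈ Set.Ioo (0 : ℝ) 1) (hw : 0 < w)
    (z : Fin w → U) :
    ∃ s : ℕ, 1 ≤ s ∧ (s : ℝ) ≤ 5 * D / α ∧ ∃ y : Fin s → U,
      ∀ i, |(∑ j, q i (z j)) / w - (∑ b, q i (y b)) / s| ≤ 15 * α / 16 := by
  classical
  set c : U → ℕ := fun u ↦ #{j | z j = u}
  have hc : ∀ f : U → ℝ, ∑ u, c u * f u = ∑ j, f (z j) := sum_card_fiber_mul z
  have hsize : ∑ u, (c u : ℝ) = w := by simpa using hc 1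
  have hT : ∀ u ∉ univ.image z, c u = 0 := fun u hu ↦
    card_eq_zero.2 <| filter_eq_empty_iff.2 fun j _ hj ↦ hu (hj ▸ mem_image_of_mem z (mem_univ j))
  obtain ⟨c', hpos, hs, herr⟩ := exists_small_multiset hq hcol hα (card_image_le.trans (by simp))
    c hT (by exact_mod_cast hsize ▸ (Nat.cast_pos.2 hw : (0 : ℝ) < w))
  obtain ⟨y, hy⟩ := exists_seq_sum_eq c'
  refine ⟨_, hpos, by exact_mod_cast hs, y, fun i ↦ ?_⟩
  have := (herr i).trans (halvingBudget_le hα.1.le hcol.nonneg (hsize ▸ w.cast_nonneg))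
  rw [Nat.cast_sum]
  rwa [weightedMean, weightedMean, hc, hsize, ← hy, abs_sub_comm] at this

end HasBalancedColorings

end Halving

section Discrepancy

variable {m : ℕ} {β : Type*} [Fintype β]

lemma exists_colDisc_eq (Q : Matrix (Fin m) β ℝ) (S : Finset β) :
    ∃ x : β → ℝ, (∀ j ∈ S, x j = 1 ∨ x j = -1) ∧ colDisc Q S = ⨆ i, |∑ j ∈ S, Q i j * x j| := by
  classical
  refine Set.Nonempty.csInf_mem (s := {v : ℝ | ∃ x : β → ℝ, (∀ j ∈ S, x j = 1 ∨ x j = -1) ∧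
    v = ⨆ i, |∑ j ∈ S, Q i j * x j|}) ⟨_, fun _ ↦ 1, fun _ _ ↦ Or.inl rfl, rfl⟩ <|
    (Set.finite_range fun σ : β → Bool ↦
      ⨆ i, |∑ j ∈ S, Q i j * if σ j then 1 else -1|).subset ?_
  rintro _ ⟨x, hx, rfl⟩
  refine ⟨fun j ↦ x j = 1, ?_⟩
  dsimp only
  congr! 4 with i j hj
  rcases hx j hj with h | h <;> norm_num [h]

lemma colDisc_le_hdisc (Q : Matrix (Fin m) β ℝ) {S : Finset β} {w : ℕ} (hS : S.card ≤ w) :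
    colDisc Q S ≤ hdisc Q w :=
  le_csSup ((Set.finite_range (colDisc Q)).subset
    (by rintro _ ⟨S, -, rfl⟩; exact ⟨S, rfl⟩)).bddAbove ⟨S, hS, rfl⟩

lemma exists_coloring_le_hdisc (Q : Matrix (Fin m) β ℝ) {S : Finset β} {w : ℕ}
    (hS : S.card ≤ w) :
    ∃ x : β → ℝ, (∀ j ∈ S, x j = 1 ∨ x j = -1) ∧ ∀ i, |∑ j ∈ S, Q i j * x j| ≤ hdisc Q w := by
  obtain ⟨x, hx, heq⟩ := exists_colDisc_eq Q S
  exact ⟨x, hx, fun i ↦ (le_ciSup (Set.finite_range _).bddAbove i).trans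
    (heq ▸ colDisc_le_hdisc Q hS)⟩

lemma hasBalancedColorings_hdiscStar {U : Type*} [Fintype U] (q : Fin m → U → ℝ) (w : ℕ) :
    HasBalancedColorings q w (hdiscStar (Matrix.of q) w) := by
  intro S hS
  obtain ⟨x, hx, hrow⟩ := exists_coloring_le_hdisc (starMatrix (Matrix.of q)) hS
  refine ⟨x, hx, fun i ↦ ?_, ?_⟩
  · simpa [hdiscStar, starMatrix] using hrow i.castSucc
  · simpa [hdiscStar, starMatrix] using hrow (Fin.last m)

end Discrepancy

lemma two_mul_mul_exp_neg_lt_one {α : ℝ} (hα : 0 < α) {m w : ℕ} (hm : 2 ≤ m)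
    (hw : 32 * log m / α ^ 2 ≤ w) : 2 * m * exp (-(2 * w * (3 * α / 16) ^ 2)) < 1 := by
  have hm2 : (2 : ℝ) ≤ m := by exact_mod_cast hm
  have hlog2 : 0 < log 2 := log_pos one_lt_two
  have hlogm : log 2 ≤ log m := log_le_log two_pos hm2
  have hexp : log (2 * m) < 2 * w * (3 * α / 16) ^ 2 := calc
    log (2 * m) = log 2 + log m := log_mul two_ne_zero (by positivity)
    _ < 9 / 128 * (32 * log m) := by linarith
    _ = 9 / 128 * (32 * log m / α ^ 2) * α ^ 2 := by field_simp
    _ ≤ 9 / 128 * w * α ^ 2 := by gcongr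
    _ = 2 * w * (3 * α / 16) ^ 2 := by ring
  calc 2 * m * exp (-(2 * w * (3 * α / 16) ^ 2)) < 2 * m * exp (-log (2 * m)) := by
        gcongr
    _ = 1 := by rw [exp_neg, exp_log (by positivity)]; field_simp

theorem stmt17_general (α : ℝ) (hα : α ∈ Set.Ioo (0 : ℝ) 1)
    (U : Type) [Fintype U] (m : ℕ) (hm : 2 ≤ m)
    (q : Fin m → U → ℝ) (hq : ∀ i u, q i u ∈ Set.Icc (0 : ℝ) 1)
    (w : ℕ) (hw : w = ⌈32 * Real.log m / α ^ 2⌉₊)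
    (n : ℕ) (hn : 1 ≤ n) (x : Fin n → U) :
    ∃ s : ℕ, 1 ≤ s ∧ (s : ℝ) ≤ (5 / α) * hdiscStar (Matrix.of fun i u => q i u) w ∧
      ∃ y : Fin s → U,
        ∀ i, |(∑ a, q i (x a)) / n - (∑ b, q i (y b)) / s| ≤ (9 / 8) * α := by
  have hw0 : 0 < w := hw ▸ Nat.ceil_pos.2
    (div_pos (mul_pos (by norm_num) (log_pos (by exact_mod_cast hm))) (pow_pos hα.1 2))
  have : Nonempty (Fin n) := ⟨⟨0, hn⟩⟩
  obtain ⟨g, hg⟩ := exists_sample_mean_close (fun i a ↦ q i (x a)) (fun i a ↦ hq i (x a)) hw0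
    (τ := 3 * α / 16) (by linarith [hα.1])
    (by simpa using two_mul_mul_exp_neg_lt_one hα.1 hm (hw ▸ Nat.le_ceil _))
  obtain ⟨s, hs1, hsD, y, hy⟩ :=
    (hasBalancedColorings_hdiscStar q w).exists_short_seq_mean_close hq hα hw0 (x ∘ g)
  refine ⟨s, hs1, by rwa [div_mul_eq_mul_div], y, fun i ↦ ?_⟩
  calc |(∑ a, q i (x a)) / n - (∑ b, q i (y b)) / s|
      ≤ |(∑ a, q i (x a)) / n - (∑ j, q i (x (g j))) / w|
        + |(∑ j, q i (x (g j))) / w - (∑ b, q i (y b)) / s| := abs_sub_le _ _ _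
    _ ≤ 3 * α / 16 + 15 * α / 16 := add_le_add (by simpa [abs_sub_comm] using hg i) (hy i)
    _ = 9 / 8 * α := by ring

theorem stmt17 (α : ℝ) (hα : α ∈ Set.Ioo (0 : ℝ) 1)
    (U : Type) [Fintype U] (m : ℕ) (hm : 2 ≤ m)
    (q : Fin m → U → ℝ) (hq : ∀ i u, q i u ∈ Set.Icc (0 : ℝ) 1)
    (w : ℕ) (hw : w = ⌈32 * Real.log m / α ^ 2⌉₊)
    (hwN : w ≤ Fintype.card U)
    (hH : hdiscStar (Matrix.of fun i u => q i u) w ≤ α * w / 4)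
    (n : ℕ) (hn : 1 ≤ n) (x : Fin n → U) (hx : Function.Injective x) :
    ∃ s : ℕ, 1 ≤ s ∧ (s : ℝ) ≤ (5 / α) * hdiscStar (Matrix.of fun i u => q i u) w ∧
      ∃ y : Fin s → U,
        ∀ i, |(∑ a, q i (x a)) / n - (∑ b, q i (y b)) / s| ≤ (9 / 8) * α :=
  stmt17_general α hα U m hm q hq w hw n hn x
end
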